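/- arXiv:1910.10990 — 3 statements merged into one kernel-verified Lean document; each statement's English description precedes it below -/
import Mathlib

section
/- For every natural number n ≥ 1 and every real x, T_n(x) + Σ_{k=1}^{n} ((−2)^k n / k!) · ( Σ_{i=0}^{⌊(n−k)/2⌋} (n−i−1)^{\underline{k−1}} · C(k+i−1, k−1) · T_{n−k−2i}(x) · x^k − (1+(−1)^{n−k})·(1/4)·((n+k)/2 − 1)^{\underline{k−1}} · C((n+k)/2 − 1, k−1) · x^k ) = cos(πn/2). -/
open Polynomial Polynomial.Chebyshev

/-- The falling factorial a(a-1)⋯(a-m+1). -/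
noncomputable def fallFac (a : ℝ) (m : ℕ) : ℝ := ∏ j ∈ Finset.range m, (a - j)

/-!
Both sides are the Taylor expansion of `T_n` about `x`, evaluated at `0`, where
`T_n(0) = cos(πn/2)`. By induction on `k`, using `T_m' = m U_{m-1}`, `U_m = Σ_{i=0}^m T_{m-2i}`,
`U_m - U_{m-2} = 2 T_m` and summation by parts,
`T_n^{(k)} = 2^{k-1} n Σ_{i=0}^{n-k} (n-i-1)^{\underline{k-1}} C(k+i-1, k-1) T_{n-k-2i}`.
These coefficients are symmetric under `i ↦ n-k-i` and `T_{-m} = T_m`, so the sum folds onto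
`i ≤ (n-k)/2`, the middle term (present only when `n-k` is even) being counted once.
-/

open Finset Nat

section Chebyshev

variable (R : Type*) [CommRing R]

theorem U_eq_sum_T (m : ℕ) : U R m = ∑ i ∈ range (m + 1), T R (m - 2 * i) := by
  induction m using Nat.twoStepInduction with
  | zero => simp
  | one => simp [sum_range_succ, two_mul]
  | more m ih _ =>
    have hlast : T R ((m : ℤ) + 2 - 2 * (m + 1 + 1 : ℕ)) = T R (m + 2) := by
      rw [← T_neg]; congr 1; push_cast; ring
    rw [Nat.cast_add, Nat.cast_two, U_eq_two_mul_T_add_U, ih, sum_range_succ' _ (m + 2),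
      sum_range_succ _ (m + 1), hlast]
    push_cast
    ring_nf

theorem derivative_sum_C_mul_T (c : ℕ → R) (N : ℕ)
    (hc : ∑ i ∈ range (N + 1), c i * (N - 2 * i) = 0) :
    derivative (∑ i ∈ range (N + 1), Polynomial.C (c i) * T R (N - 2 * i)) =
      ∑ s ∈ range N,
        Polynomial.C (2 * ∑ i ∈ range (s + 1), c i * (N - 2 * i)) * T R (N - 1 - 2 * s) := by
  have hderiv : ∀ i, derivative (Polynomial.C (c i) * T R (N - 2 * i)) =
      U R (N - 2 * i - 1) • Polynomial.C (c i * (N - 2 * i)) := by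
    intro i
    rw [derivative_C_mul, T_derivative_eq_U, smul_eq_mul]
    simp only [map_mul, map_sub, map_natCast, map_ofNat]
    push_cast
    ring
  have hstep : ∀ s : ℕ, U R (N - 2 * (s + 1 : ℕ) - 1) - U R (N - 2 * s - 1) =
      -(2 * T R (N - 1 - 2 * s)) := by
    intro s
    linear_combination (norm := (push_cast; ring_nf))
      two_mul_T_eq_U_sub_U R (N - 2 * (s + 1 : ℕ) - 1)
  rw [derivative_sum, sum_congr rfl fun i _ => hderiv i, sum_range_by_parts, ← map_sum, hc,
    map_zero, smul_zero, zero_sub, add_tsub_cancel_right, ← sum_neg_distrib]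
  refine sum_congr rfl fun s _ => ?_
  rw [hstep, ← map_sum, smul_eq_mul, map_mul, map_ofNat]
  ring

end Chebyshev

theorem fallFac_eq_eval_descPochhammer (a : ℝ) (m : ℕ) :
    fallFac a m = (descPochhammer ℝ m).eval a :=
  (descPochhammer_eval_eq_prod_range m a).symm

theorem fallFac_succ (a : ℝ) (m : ℕ) : fallFac a (m + 1) = fallFac a m * (a - m) :=
  prod_range_succ _ _

theorem fallFac_succ' (a : ℝ) (m : ℕ) : fallFac a (m + 1) = a * fallFac (a - 1) m := by
  simp only [fallFac_eq_eval_descPochhammer, descPochhammer_succ_left, eval_mul, eval_X, eval_comp,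
    eval_sub, eval_one]

theorem fallFac_natCast (m j : ℕ) : fallFac m j = m.descFactorial j := by
  rw [fallFac_eq_eval_descPochhammer, descPochhammer_eval_eq_descFactorial]

noncomputable def derivCoeff (r : ℝ) (j i : ℕ) : ℝ := fallFac (r - i - 1) j * (j + i).choose j

theorem derivCoeff_zero (r : ℝ) (i : ℕ) : derivCoeff r 0 i = 1 := by
  simp [derivCoeff, fallFac]

theorem sum_range_derivCoeff_mul (r : ℝ) (j s : ℕ) :
    ∑ i ∈ range (s + 1), derivCoeff r j i * (r - j - 1 - 2 * i) = derivCoeff r (j + 1) s := by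
  induction s with
  | zero =>
    simp only [zero_add, sum_range_one, derivCoeff, fallFac_succ, Nat.cast_zero, mul_zero, sub_zero,
      add_zero, Nat.choose_self, Nat.cast_one, mul_one]
    ring
  | succ s ih =>
    have hpascal : ((j + 1 + (s + 1)).choose (j + 1) : ℝ) =
        (j + s + 1).choose j + (j + s + 1).choose (j + 1) := by
      rw [show j + 1 + (s + 1) = j + s + 1 + 1 by omega, Nat.choose_succ_succ']
      push_cast; ring
    have hratio : ((j + s + 1).choose (j + 1) : ℝ) * (j + 1) = (j + s + 1).choose j * (s + 1) := by
      have := Nat.choose_succ_right_eq (j + s + 1) j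
      rw [show j + s + 1 - j = s + 1 by omega] at this
      exact_mod_cast this
    rw [sum_range_succ, ih]
    simp only [derivCoeff]
    rw [hpascal, show j + (s + 1) = j + s + 1 by omega, show j + 1 + s = j + s + 1 by omega,
      fallFac_succ' (r - s - 1), fallFac_succ (r - (s + 1 : ℕ) - 1)]
    push_cast
    linear_combination (norm := ring_nf) fallFac (r - (s + 1) - 1) j * hratio

theorem derivCoeff_natCast (N j i : ℕ) (hi : i ≤ N) :
    derivCoeff (N + j + 1 : ℕ) j i = j ! * (N + j - i).choose j * (j + i).choose j := by
  rw [derivCoeff, show ((N + j + 1 : ℕ) : ℝ) - i - 1 = (N + j - i : ℕ) by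
      rw [Nat.cast_sub (by omega)]; push_cast; ring,
    fallFac_natCast, descFactorial_eq_factorial_mul_choose]
  push_cast; ring

theorem derivCoeff_symm (N j i : ℕ) (hi : i ≤ N) :
    derivCoeff (N + j + 1 : ℕ) j (N - i) = derivCoeff (N + j + 1 : ℕ) j i := by
  rw [derivCoeff_natCast _ _ _ hi, derivCoeff_natCast _ _ _ (N.sub_le i),
    show N + j - (N - i) = j + i by omega, show j + (N - i) = N + j - i by omega]
  ring

theorem derivCoeff_half (m j : ℕ) :
    derivCoeff (m + m + j + 1 : ℕ) j m = fallFac (m + j : ℕ) j * ((m + j).choose j : ℝ) := by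
  rw [derivCoeff, add_comm j m]
  congr 2
  push_cast
  ring

theorem derivCoeff_succ_eq_zero (N j : ℕ) : derivCoeff (N + j + 1 : ℕ) (j + 1) N = 0 := by
  rw [derivCoeff, show ((N + j + 1 : ℕ) : ℝ) - N - 1 = (j : ℕ) by push_cast; ring, fallFac_natCast,
    descFactorial_of_lt j.lt_succ_self]
  simp

theorem iterate_derivative_T (N j : ℕ) :
    derivative^[j + 1] (T ℝ (N + j + 1 : ℕ)) =
      Polynomial.C (2 ^ j * ((N + j + 1 : ℕ) : ℝ)) *
        ∑ i ∈ range (N + 1), Polynomial.C (derivCoeff (N + j + 1 : ℕ) j i) * T ℝ (N - 2 * i) := by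
  induction j generalizing N with
  | zero =>
    rw [Function.iterate_one, T_derivative_eq_U,
      show ((N + 0 + 1 : ℕ) : ℤ) - 1 = N by push_cast; ring, U_eq_sum_T]
    simp [derivCoeff_zero]
  | succ j ih =>
    have hn : N + 1 + j + 1 = N + (j + 1) + 1 := by omega
    have hsum (s : ℕ) :
        ∑ i ∈ range (s + 1), derivCoeff (N + (j + 1) + 1 : ℕ) j i * ((N + 1 : ℕ) - 2 * i) =
          derivCoeff (N + (j + 1) + 1 : ℕ) (j + 1) s := by
      rw [← sum_range_derivCoeff_mul]
      refine sum_congr rfl fun i _ => ?_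
      push_cast; ring
    have hzero : derivCoeff (N + (j + 1) + 1 : ℕ) (j + 1) (N + 1) = 0 := by
      rw [← hn]; exact derivCoeff_succ_eq_zero (N + 1) j
    rw [Function.iterate_succ_apply', ← hn, ih (N + 1), derivative_C_mul, hn,
      derivative_sum_C_mul_T _ _ _ (by rw [hsum, hzero]), mul_sum, mul_sum]
    refine sum_congr rfl fun s _ => ?_
    rw [hsum]
    simp only [map_mul, map_pow, map_ofNat, map_natCast]
    push_cast
    ring_nf

theorem eval_eq_sum_range_iterate_derivative {K : Type*} [Field K] [CharZero K] {p : K[X]} {n : ℕ}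
    (hp : p.natDegree ≤ n) (x y : K) :
    p.eval y = ∑ k ∈ range (n + 1), (derivative^[k] p).eval x * (y - x) ^ k / k ! := by
  have hy := taylor_eval x p (y - x)
  rw [sub_add_cancel] at hy
  rw [← hy, eval_eq_sum_range' (n := n + 1) (by rw [natDegree_taylor]; omega)]
  refine sum_congr rfl fun k _ => ?_
  rw [taylor_coeff, ← factorial_smul_hasseDeriv, LinearMap.smul_apply, nsmul_eq_mul, eval_mul,
    eval_natCast, mul_assoc, mul_div_cancel_left₀ _ (Nat.cast_ne_zero.2 k.factorial_ne_zero)]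

theorem sum_range_eq_two_mul_sum_half_sub {K : Type*} [Field K] [CharZero K] (f : ℕ → K) (N : ℕ)
    (hf : ∀ i ≤ N, f (N - i) = f i) :
    ∑ i ∈ range (N + 1), f i =
      2 * ∑ i ∈ range (N / 2 + 1), f i - (1 + (-1) ^ N) / 2 * f (N / 2) := by
  have htail : ∑ x ∈ range (N - N / 2), f (N / 2 + 1 + x) = ∑ x ∈ range (N - N / 2), f x := by
    rw [← sum_range_reflect]
    refine sum_congr rfl fun x hx => ?_
    rw [mem_range] at hx
    rw [show N / 2 + 1 + (N - N / 2 - 1 - x) = N - x by omega, hf x (by omega)]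
  rw [show N + 1 = (N / 2 + 1) + (N - N / 2) by omega, sum_range_add, htail]
  obtain ⟨m, rfl | rfl⟩ := Nat.even_or_odd' N
  · rw [show 2 * m - 2 * m / 2 = m by omega, show 2 * m / 2 = m by omega, sum_range_succ, pow_mul]
    norm_num
    ring
  · rw [show 2 * m + 1 - (2 * m + 1) / 2 = m + 1 by omega, show (2 * m + 1) / 2 = m by omega,
      pow_succ, pow_mul]
    norm_num
    ring

theorem eval_iterate_derivative_T_mul_pow_div_factorial (n k : ℕ) (hk : 1 ≤ k) (hkn : k ≤ n)
    (x : ℝ) :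
    (derivative^[k] (T ℝ n)).eval x * (0 - x) ^ k / k ! =
      ((-2 : ℝ) ^ k * n / k !) *
        ((∑ i ∈ range ((n - k) / 2 + 1),
            fallFac ((n : ℝ) - i - 1) (k - 1) * ((k + i - 1).choose (k - 1) : ℝ)
              * (T ℝ ((n - k - 2 * i : ℕ))).eval x * x ^ k)
          - (1 + (-1 : ℝ) ^ (n - k)) * (1 / 4) * fallFac (((n + k) / 2 - 1 : ℕ) : ℝ) (k - 1)
              * (((n + k) / 2 - 1).choose (k - 1) : ℝ) * x ^ k) := by
  obtain ⟨j, rfl⟩ : ∃ j, k = j + 1 := ⟨k - 1, by omega⟩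
  obtain ⟨N, rfl⟩ : ∃ N, n = N + j + 1 := ⟨n - j - 1, by omega⟩
  set f : ℕ → ℝ := fun i => derivCoeff (N + j + 1 : ℕ) j i * (T ℝ (N - 2 * i)).eval x with hf_def
  have hf : ∀ i ≤ N, f (N - i) = f i := by
    intro i hi
    simp only [f, derivCoeff_symm _ _ _ hi]
    rw [← T_neg, Nat.cast_sub hi]
    ring_nf
  have hterm : ∀ i ∈ range (N / 2 + 1),
      fallFac (((N + j + 1 : ℕ) : ℝ) - i - 1) j * ((j + i).choose j : ℝ)
        * (T ℝ ((N - 2 * i : ℕ))).eval x * x ^ (j + 1) = f i * x ^ (j + 1) := by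
    intro i hi
    rw [mem_range] at hi
    rw [Nat.cast_sub (by omega)]
    simp [f, derivCoeff]
  have hmid : Even N → fallFac (((N + j + 1 + (j + 1)) / 2 - 1 : ℕ) : ℝ) j
      * (((N + j + 1 + (j + 1)) / 2 - 1).choose j : ℝ) = f (N / 2) := by
    rintro ⟨m, rfl⟩
    rw [show (m + m + j + 1 + (j + 1)) / 2 - 1 = m + j by omega, show (m + m) / 2 = m by omega]
    simp only [f, show ((m + m : ℕ) : ℤ) - 2 * m = 0 by push_cast; ring, T_zero, eval_one, mul_one,
      derivCoeff_half]
  simp only [show N + j + 1 - (j + 1) = N by omega, add_tsub_cancel_right,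
    show ∀ i, j + 1 + i - 1 = j + i from fun i => by omega]
  rw [sum_congr rfl hterm, ← sum_mul, iterate_derivative_T, eval_mul, eval_C, eval_finsetSum]
  simp only [eval_mul, eval_C]
  rw [← hf_def, sum_range_eq_two_mul_sum_half_sub f N hf, zero_sub, neg_pow, neg_pow (2 : ℝ)]
  rcases Nat.even_or_odd N with he | ho
  · rw [he.neg_one_pow]
    linear_combination
      ((-1) ^ (j + 1) * 2 ^ (j + 1) * ((N + j + 1 : ℕ) : ℝ) / (j + 1)! * x ^ (j + 1) / 2) * hmid he
  · rw [ho.neg_one_pow]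
    ring

theorem chebyshev_T_identity_general (n : ℕ) (x : ℝ) :
    (T ℝ n).eval x
      + ∑ k ∈ Finset.Icc 1 n, ((-2 : ℝ) ^ k * n / (Nat.factorial k)) *
        ((∑ i ∈ Finset.range ((n - k) / 2 + 1),
            fallFac ((n : ℝ) - i - 1) (k - 1) * (Nat.choose (k + i - 1) (k - 1) : ℝ)
              * (T ℝ ((n - k - 2 * i : ℕ))).eval x * x ^ k)
          - (1 + (-1 : ℝ) ^ (n - k)) * (1 / 4)
              * fallFac (((n + k) / 2 - 1 : ℕ) : ℝ) (k - 1)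
              * (Nat.choose ((n + k) / 2 - 1) (k - 1) : ℝ) * x ^ k)
    = Real.cos (Real.pi * n / 2) := by
  have hcos : Real.cos (Real.pi * n / 2) = (T ℝ n).eval 0 := by
    rw [← Real.cos_pi_div_two, T_real_cos, Int.cast_natCast]
    ring_nf
  have hdeg : (T ℝ n).natDegree ≤ n := by simp [natDegree_T]
  rw [hcos, eval_eq_sum_range_iterate_derivative hdeg x 0, sum_range_succ', add_comm,
    ← Ico_add_one_right_eq_Icc, sum_Ico_eq_sum_range, add_tsub_cancel_right]
  simp only [Function.iterate_zero_apply, pow_zero, factorial_zero, cast_one, div_one, mul_one]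
  congr 1
  refine sum_congr rfl fun k hk => ?_
  rw [add_comm 1 k,
    eval_iterate_derivative_T_mul_pow_div_factorial n (k + 1) k.succ_pos (mem_range.1 hk)]

theorem chebyshev_T_identity (n : ℕ) (hn : 1 ≤ n) (x : ℝ) :
    (T ℝ n).eval x
      + ∑ k ∈ Finset.Icc 1 n, ((-2 : ℝ) ^ k * n / (Nat.factorial k)) *
        ((∑ i ∈ Finset.range ((n - k) / 2 + 1),
            fallFac ((n : ℝ) - i - 1) (k - 1) * (Nat.choose (k + i - 1) (k - 1) : ℝ)
              * (T ℝ ((n - k - 2 * i : ℕ))).eval x * x ^ k)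
          - (1 + (-1 : ℝ) ^ (n - k)) * (1 / 4)
              * fallFac (((n + k) / 2 - 1 : ℕ) : ℝ) (k - 1)
              * (Nat.choose ((n + k) / 2 - 1) (k - 1) : ℝ) * x ^ k)
    = Real.cos (Real.pi * n / 2) :=
  chebyshev_T_identity_general n x
end

section
/- The polynomial 8x₁³ − 6x₁x₂x₀ − 3x₀²x₁ + x₃x₀² lies in the kernel of the derivation D_T of ℂ[x₀,x₁,x₂,x₃] defined by D_T(x₀)=0, D_T(x₁)=x₀, D_T(x₂)=4x₁, D_T(x₃)=6x₂+3x₀; consequently 8T_1(x)³ − 6T_1(x)T_2(x)T_0(x) − 3T_0(x)²T_1(x) + T_3(x)T_0(x)² = 0 identically. -/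
open Polynomial Polynomial.Chebyshev

def cayleyT3 {A : Type*} [CommRing A] (x₀ x₁ x₂ x₃ : A) : A :=
  8 * x₁ ^ 3 - 6 * x₁ * x₂ * x₀ - 3 * x₀ ^ 2 * x₁ + x₃ * x₀ ^ 2

theorem Derivation.map_ofNat {R A M : Type*} [CommSemiring R] [CommSemiring A] [Algebra R A]
    [AddCommMonoid M] [Module A M] [Module R M] (D : Derivation R A M) (n : ℕ) [n.AtLeastTwo] :
    D (no_index (OfNat.ofNat n) : A) = 0 :=
  D.map_natCast n

theorem Derivation.map_cayleyT3_eq_zero {R A : Type*} [CommSemiring R] [CommRing A] [Algebra R A]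
    (D : Derivation R A A) {x₀ x₁ x₂ x₃ : A} (h₀ : D x₀ = 0) (h₁ : D x₁ = x₀)
    (h₂ : D x₂ = 4 * x₁) (h₃ : D x₃ = 6 * x₂ + 3 * x₀) :
    D (cayleyT3 x₀ x₁ x₂ x₃) = 0 := by
  simp only [cayleyT3, map_sub, map_add, Derivation.leibniz, Derivation.leibniz_pow,
    Derivation.map_ofNat, h₀, h₁, h₂, h₃, smul_eq_mul]
  ring

theorem Polynomial.Chebyshev.T_three (R : Type*) [CommRing R] :
    T R 3 = 4 * X ^ 3 - 3 * X := by
  linear_combination (norm := ring_nf) T_add_two R 1 + 2 * X * T_two R - T_one R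

theorem cayleyT3_chebyshevT (R : Type*) [CommRing R] :
    cayleyT3 (T R 0) (T R 1) (T R 2) (T R 3) = 0 := by
  rw [cayleyT3, T_zero, T_one, T_two, T_three]
  ring

open MvPolynomial

theorem cayley_element_T3
    (D : Derivation ℂ (MvPolynomial (Fin 4) ℂ) (MvPolynomial (Fin 4) ℂ))
    (h0 : D (X 0) = 0) (h1 : D (X 1) = X 0) (h2 : D (X 2) = 4 * X 1)
    (h3 : D (X 3) = 6 * X 2 + 3 * X 0) :
    D (8 * X 1 ^ 3 - 6 * X 1 * X 2 * X 0 - 3 * X 0 ^ 2 * X 1 + X 3 * X 0 ^ 2) = 0 ∧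
    (8 * (T ℝ 1) ^ 3 - 6 * T ℝ 1 * T ℝ 2 * T ℝ 0 - 3 * (T ℝ 0) ^ 2 * T ℝ 1
      + T ℝ 3 * (T ℝ 0) ^ 2 = 0) :=
  ⟨D.map_cayleyT3_eq_zero h0 h1 h2 h3, cayleyT3_chebyshevT ℝ⟩
end

section
/- For every natural number n ≥ 1 and real x, Σ_{k=0}^{n} ( Σ_{i=0}^{⌊(n−k)/2⌋} (−1)^{n−k−2i} · ((k+1)/(i+k+1)) · C(n−i, k+i) · C(n−k−i−1, i) · (2x)^{n−k−2i} ) · U_k(x) = cos(πn/2). -/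
/-!
Write `c n k` for the inner sum and `S n = ∑ₖ c n k · U_k(x)`. Pascal's rule in both binomial
coefficients gives `c (n+2) k + c n k = c (n+1) (k-1) - 2x · c (n+1) k + c (n+1) (k+1)`, the
transpose of the Chebyshev recurrence `U_{k+1} - 2x U_k + U_{k-1} = 0`. Summing against `U_k`
therefore gives `S (n+2) = -S n`, and `S 0 = 1`, `S 1 = 0`.
-/

open Polynomial Polynomial.Chebyshev

/-- Generalized binomial coefficient with real upper argument. -/
noncomputable def gbinom (a : ℝ) (m : ℕ) : ℝ := fallFac a m / Nat.factorial m

open Finset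

theorem gbinom_natCast (a m : ℕ) : gbinom a m = a.choose m := by
  rw [gbinom, fallFac, ← descPochhammer_eval_eq_prod_range, Nat.cast_choose_eq_descPochhammer_div]

theorem gbinom_natCast_sub_one {m i : ℕ} (h : i ≤ m) :
    gbinom ((m : ℝ) - 1) i = (m - 1).choose i := by
  rcases m with _ | m
  · obtain rfl : i = 0 := by omega
    simp [gbinom, fallFac]
  · simpa using gbinom_natCast m i

theorem sum_range_chebyshevU_recurrence_eq_zero {R : Type*} [CommRing R] (x : R) (a : ℕ → R)
    {N : ℕ} (ha : ∀ k ≥ N, a k = 0) :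
    ∑ k ∈ range (N + 1),
        ((if k = 0 then 0 else a (k - 1)) - 2 * x * a k + a (k + 1)) * (U R k).eval x = 0 := by
  have left : ∑ k ∈ range (N + 1), (if k = 0 then 0 else a (k - 1)) * (U R k).eval x
      = ∑ k ∈ range (N + 1), a k * (U R ((k : ℤ) + 1)).eval x := by
    rw [sum_range_succ', sum_range_succ, ha N le_rfl]
    simp
  have right : ∑ k ∈ range (N + 1), a (k + 1) * (U R k).eval x
      = ∑ k ∈ range (N + 1), a k * (U R ((k : ℤ) - 1)).eval x := by
    rw [sum_range_succ, ha (N + 1) (by omega), sum_range_succ' _ N]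
    simp -- the `k = 0` term vanishes because `U (-1) = 0`
  simp only [add_mul, sub_mul, sum_add_distrib, sum_sub_distrib, left, right]
  rw [← sum_sub_distrib, ← sum_add_distrib]
  refine sum_eq_zero fun k _ => ?_
  simp only [U_add_one, eval_sub, eval_mul, eval_ofNat, eval_X]
  ring

namespace ChebyshevReordered

noncomputable def summand (x : ℝ) (n k i : ℕ) : ℝ :=
  (-1 : ℝ) ^ (n - k - 2 * i) * (((k : ℝ) + 1) / ((i : ℝ) + k + 1))
    * (Nat.choose (n - i) (k + i) : ℝ)
    * gbinom ((n : ℝ) - k - i - 1) i * (2 * x) ^ (n - k - 2 * i)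

-- At `i = d = 0` the truncated `0 - 1` gives `choose 0 0 = 1`, matching `gbinom (-1) 0 = 1`.
noncomputable def weight (k i d : ℕ) : ℝ :=
  (k + 1) / (i + k + 1) * (k + i + d).choose (k + i) * (i + d - 1).choose i

theorem summand_eq_zero_of_lt (x : ℝ) {n k i : ℕ} (h : n < k + 2 * i) :
    summand x n k i = 0 := by
  simp [summand, Nat.choose_eq_zero_of_lt (by omega : n - i < k + i)]

theorem summand_zero_right (x : ℝ) (n k : ℕ) :
    summand x n k 0 = n.choose k * (-(2 * x)) ^ (n - k) := by
  have hratio : ((k : ℝ) + 1) / (0 + k + 1) = 1 := by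
    rw [zero_add]
    exact div_self (by positivity)
  simp only [summand, mul_zero, Nat.sub_zero, add_zero, Nat.cast_zero, hratio, gbinom, fallFac,
    range_zero, prod_empty, Nat.factorial_zero, Nat.cast_one, div_one, mul_one,
    neg_pow (2 * x)]
  ring

theorem summand_add (x : ℝ) (k i d : ℕ) :
    summand x (k + 2 * i + d) k i = weight k i d * (-(2 * x)) ^ d := by
  have hexp : k + 2 * i + d - k - 2 * i = d := by omega
  have htop : k + 2 * i + d - i = k + i + d := by omega
  have hgb : ((k + 2 * i + d : ℕ) : ℝ) - k - i - 1 = ((i + d : ℕ) : ℝ) - 1 := by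
    push_cast
    ring
  rw [summand, hexp, htop, hgb, gbinom_natCast_sub_one (by omega), weight,
    neg_pow (2 * x)]
  ring

theorem weight_zero_right (k i : ℕ) : weight k i 0 = if i = 0 then 1 else 0 := by
  rcases i with _ | i
  · simp [weight, div_self (by positivity : (k : ℝ) + 1 ≠ 0)]
  · simp [weight]

theorem weight_recurrence (k i e : ℕ) :
    weight k (i + 1) (e + 1) + weight k i (e + 1)
      = k / (i + k + 1) * (k + i + (e + 1)).choose (k + i) * (i + (e + 1)).choose (i + 1)
        + weight (k + 1) i (e + 1) + weight k (i + 1) e := by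
  have hPQ : ((k + i + e + 1).choose (k + i + 1) : ℝ) * ((k : ℝ) + i + 1)
      = (k + i + e + 1).choose (k + i) * ((e : ℝ) + 1) := by
    have h := Nat.choose_succ_right_eq (k + i + e + 1) (k + i)
    rw [show k + i + e + 1 - (k + i) = e + 1 by omega] at h
    exact_mod_cast h
  have hRS : ((i + e).choose (i + 1) : ℝ) * ((i : ℝ) + 1) = (i + e).choose i * e := by
    have h := Nat.choose_succ_right_eq (i + e) i
    rw [show i + e - i = e by omega] at h
    exact_mod_cast h
  set P : ℝ := ↑((k + i + e + 1).choose (k + i + 1))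
  set Q : ℝ := ↑((k + i + e + 1).choose (k + i))
  set R : ℝ := ↑((i + e).choose (i + 1))
  set S : ℝ := ↑((i + e).choose i)
  have w₁ : weight k (i + 1) (e + 1) = (k + 1) / (i + k + 2) * (Q + P) * (S + R) := by
    rw [weight, show k + (i + 1) + (e + 1) = k + i + e + 1 + 1 by omega,
      show k + (i + 1) = k + i + 1 by omega, show i + 1 + (e + 1) - 1 = i + e + 1 by omega,
      Nat.choose_succ_succ' (k + i + e + 1), Nat.choose_succ_succ' (i + e)]
    push_cast
    ring
  have w₂ : weight k i (e + 1) = (k + 1) / (i + k + 1) * Q * S := by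
    rw [weight, show k + i + (e + 1) = k + i + e + 1 by omega,
      show i + (e + 1) - 1 = i + e by omega]
  have w₃ : weight (k + 1) i (e + 1) = (k + 2) / (i + k + 2) * (Q + P) * S := by
    rw [weight, show k + 1 + i + (e + 1) = k + i + e + 1 + 1 by omega,
      show k + 1 + i = k + i + 1 by omega, show i + (e + 1) - 1 = i + e by omega,
      Nat.choose_succ_succ' (k + i + e + 1)]
    push_cast
    ring
  have w₄ : weight k (i + 1) e = (k + 1) / (i + k + 2) * P * R := by
    rw [weight, show k + (i + 1) + e = k + i + e + 1 by omega,
      show k + (i + 1) = k + i + 1 by omega, show i + 1 + e - 1 = i + e by omega]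
    push_cast
    ring
  have w₀ : k / (i + k + 1) * (k + i + (e + 1)).choose (k + i) * (i + (e + 1)).choose (i + 1)
      = k / (i + k + 1) * Q * (S + R) := by
    rw [show k + i + (e + 1) = k + i + e + 1 by omega, show i + (e + 1) = i + e + 1 by omega,
      Nat.choose_succ_succ' (i + e)]
    push_cast
    ring
  rw [w₁, w₂, w₃, w₄, w₀]
  field_simp
  linear_combination (-S) * hPQ + Q * hRS

theorem summand_succ_zero (x : ℝ) (n k : ℕ) :
    summand x (n + 1) k 0
      = (if k = 0 then 0 else summand x n (k - 1) 0) - 2 * x * summand x n k 0 := by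
  simp only [summand_zero_right]
  rcases k with _ | k
  · simp only [Nat.choose_zero_right, Nat.sub_zero, pow_succ, if_true]
    ring
  · rw [if_neg k.succ_ne_zero, Nat.add_sub_cancel, Nat.choose_succ_succ', Nat.add_sub_add_right]
    rcases lt_or_ge k n with h | h
    · rw [show n - k = n - (k + 1) + 1 by omega, pow_succ]
      push_cast
      ring
    · rw [Nat.choose_eq_zero_of_lt (by omega : n < k + 1)]
      push_cast
      ring

theorem summand_succ_succ (x : ℝ) (n k i : ℕ) :
    summand x (n + 2) k (i + 1) + summand x n k i
      = (if k = 0 then 0 else summand x (n + 1) (k - 1) (i + 1))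
        - 2 * x * summand x (n + 1) k (i + 1) + summand x (n + 1) (k + 1) i := by
  rcases lt_or_ge n (k + 2 * i) with h | h
  · have hprev : (if k = 0 then 0 else summand x (n + 1) (k - 1) (i + 1)) = 0 := by
      split_ifs
      · rfl
      · exact summand_eq_zero_of_lt x (by omega)
    rw [hprev, summand_eq_zero_of_lt x (by omega : n + 2 < k + 2 * (i + 1)),
      summand_eq_zero_of_lt x h, summand_eq_zero_of_lt x (by omega : n + 1 < k + 2 * (i + 1)),
      summand_eq_zero_of_lt x (by omega : n + 1 < k + 1 + 2 * i)]
    ring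
  obtain ⟨d, rfl⟩ := Nat.exists_eq_add_of_le h
  have hprev : (if k = 0 then 0 else summand x (k + 2 * i + d + 1) (k - 1) (i + 1))
      = k / (i + k + 1) * (k + i + d).choose (k + i) * (i + d).choose (i + 1)
        * (-(2 * x)) ^ d := by
    rcases k with _ | k
    · simp
    · rw [if_neg k.succ_ne_zero, Nat.add_sub_cancel,
        show k + 1 + 2 * i + d + 1 = k + 2 * (i + 1) + d by omega, summand_add, weight,
        show k + (i + 1) = k + 1 + i by omega, show i + 1 + d - 1 = i + d by omega]
      push_cast
      ring
  rw [hprev, show k + 2 * i + d + 2 = k + 2 * (i + 1) + d by omega, summand_add, summand_add,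
    show k + 2 * i + d + 1 = k + 1 + 2 * i + d by omega, summand_add]
  rcases d with _ | e
  · rw [summand_eq_zero_of_lt x (by omega)]
    simp [weight_zero_right]
  · rw [show k + 1 + 2 * i + (e + 1) = k + 2 * (i + 1) + e by omega, summand_add, pow_succ]
    linear_combination (-(2 * x)) ^ e * (-(2 * x)) * weight_recurrence k i e

noncomputable def coeff (x : ℝ) (n k : ℕ) : ℝ := ∑ i ∈ range (n + 1), summand x n k i

theorem coeff_eq_sum_range (x : ℝ) (k : ℕ) {n N : ℕ} (h : n + 1 ≤ N) :
    coeff x n k = ∑ i ∈ range N, summand x n k i :=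
  (eventually_constant_sum (fun _ hi => summand_eq_zero_of_lt x (by omega)) h).symm

theorem coeff_eq_zero_of_lt (x : ℝ) {n k : ℕ} (h : n < k) : coeff x n k = 0 :=
  sum_eq_zero fun _ _ => summand_eq_zero_of_lt x (by omega)

theorem coeff_succ_succ (x : ℝ) (n k : ℕ) :
    coeff x (n + 2) k + coeff x n k
      = (if k = 0 then 0 else coeff x (n + 1) (k - 1)) - 2 * x * coeff x (n + 1) k
        + coeff x (n + 1) (k + 1) := by
  have hprev : (if k = 0 then 0 else coeff x (n + 1) (k - 1))
      = ∑ i ∈ range (n + 3), if k = 0 then 0 else summand x (n + 1) (k - 1) i := by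
    rw [sum_ite_irrel, sum_const_zero, coeff_eq_sum_range x _ (by omega : n + 1 + 1 ≤ n + 3)]
  rw [hprev, coeff, coeff_eq_sum_range x k (by omega : n + 1 ≤ n + 2),
    coeff_eq_sum_range x k (by omega : n + 1 + 1 ≤ n + 3), coeff, sum_range_succ' _ (n + 2),
    sum_range_succ' (fun i => if k = 0 then 0 else summand x (n + 1) (k - 1) i) (n + 2),
    sum_range_succ' (summand x (n + 1) k) (n + 2)]
  have hsum := sum_congr rfl fun i (_ : i ∈ range (n + 2)) => summand_succ_succ x n k i
  rw [sum_add_distrib, sum_add_distrib, sum_sub_distrib, ← mul_sum] at hsum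
  linear_combination hsum + summand_succ_zero x (n + 1) k

noncomputable def uExpansion (x : ℝ) (n : ℕ) : ℝ :=
  ∑ k ∈ range (n + 1), coeff x n k * (U ℝ k).eval x

theorem uExpansion_add_two (x : ℝ) (n : ℕ) : uExpansion x (n + 2) = -uExpansion x n := by
  have hext : uExpansion x n = ∑ k ∈ range (n + 2 + 1), coeff x n k * (U ℝ k).eval x :=
    (eventually_constant_sum (fun _ hk => by rw [coeff_eq_zero_of_lt x hk, zero_mul])
      (by omega)).symm
  rw [eq_neg_iff_add_eq_zero, hext, uExpansion, ← sum_add_distrib]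
  simp only [← add_mul, coeff_succ_succ]
  exact sum_range_chebyshevU_recurrence_eq_zero x (coeff x (n + 1))
    fun _ hk => coeff_eq_zero_of_lt x (by omega)

theorem uExpansion_zero (x : ℝ) : uExpansion x 0 = 1 := by
  simp [uExpansion, coeff, summand_zero_right]

theorem uExpansion_one (x : ℝ) : uExpansion x 1 = 0 := by
  simp [uExpansion, coeff, sum_range_succ, summand_zero_right,
    summand_eq_zero_of_lt x (by omega : 1 < 0 + 2 * 1),
    summand_eq_zero_of_lt x (by omega : 1 < 1 + 2 * 1)]

theorem uExpansion_eq_cos (x : ℝ) (n : ℕ) : uExpansion x n = Real.cos (Real.pi * n / 2) := by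
  induction n using Nat.twoStepInduction with
  | zero => simp [uExpansion_zero]
  | one => simp [uExpansion_one]
  | more n ih _ =>
    rw [uExpansion_add_two, ih, ← Real.cos_add_pi]
    congr 1
    push_cast
    ring

end ChebyshevReordered

theorem chebyshev_U_reordered_identity_general (n : ℕ) (x : ℝ) :
    ∑ k ∈ Finset.range (n + 1),
        (∑ i ∈ Finset.range ((n - k) / 2 + 1),
            (-1 : ℝ) ^ (n - k - 2 * i) * (((k : ℝ) + 1) / ((i : ℝ) + k + 1))
              * (Nat.choose (n - i) (k + i) : ℝ)
              * gbinom ((n : ℝ) - k - i - 1) i * (2 * x) ^ (n - k - 2 * i))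
          * (U ℝ k).eval x
    = Real.cos (Real.pi * n / 2) := by
  rw [← ChebyshevReordered.uExpansion_eq_cos x n]
  refine sum_congr rfl fun k _ => congrArg (· * _) ?_
  exact (eventually_constant_sum
    (fun _ hi => ChebyshevReordered.summand_eq_zero_of_lt x (by omega)) (by omega)).symm

theorem chebyshev_U_reordered_identity (n : ℕ) (hn : 1 ≤ n) (x : ℝ) :
    ∑ k ∈ Finset.range (n + 1),
        (∑ i ∈ Finset.range ((n - k) / 2 + 1),
            (-1 : ℝ) ^ (n - k - 2 * i) * (((k : ℝ) + 1) / ((i : ℝ) + k + 1))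
              * (Nat.choose (n - i) (k + i) : ℝ)
              * gbinom ((n : ℝ) - k - i - 1) i * (2 * x) ^ (n - k - 2 * i))
          * (U ℝ k).eval x
    = Real.cos (Real.pi * n / 2) :=
  chebyshev_U_reordered_identity_general n x
end
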